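/- Let φ(x) = max{0, x−1} and let Â₃ := { (uⁱ, v^{i+1}) : (u,v) ∈ A, w((u,v)) > 0, i ∈ {1,…,k−1} } with capacity c((uⁱ,v^{i+1})) := w((u,v)). Then: for every X ⊆ V̂ with s ∈ X and t ∉ X and δ(X) < M there exists a k-potential p of G with H(p) = δ(X); and conversely, for every k-potential p of G there exists X ⊆ V̂ with s ∈ X, t ∉ X, and δ(X) = H(p). -/

import Mathlib

/-!
A cut `X` of capacity below `M` crosses no arc of capacity `M`. Hence each column
`{v¹, …, vᵏ}` meets `X` in an upper segment, the column of `⊤` lies in `X`, the column of `⊥`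
avoids it, and the arcs `(vⁱ, uⁱ)` make the column of `u` at least as full as that of `v`: the
number `p(v)` of copies of `v` outside `X` is a `k`-potential, and `X` is the layered cut of `p`.
Conversely every `k`-potential has a layered cut. In a layered cut only arcs `(uⁱ, v^{i+1})` of
`Â₃` cross, namely those with `p(u) ≤ i` and `i + 1 < p(v)` (copies indexed from `0`), and there
are `max{0, p(v) − p(u) − 1} = φ(p(v) − p(u))` of them.
-/

/-- The vertex set `V̂` of the extended digraph: `k` copies `vⁱ` of each vertex `v ∈ V`
(encoded `Sum.inl (v, i)`), plus the source `s := Sum.inr true` and the sink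
`t := Sum.inr false`. -/
abbrev VhatT (V : Type*) (k : ℕ) : Type _ := (V × Fin k) ⊕ Bool

/-- A `k`-potential of the DAG `G = (V, A)` with source `⊤ = top` and sink `⊥ = bot`:
`p(⊥) = k`, `p(⊤) = 0`, `0 ≤ p(v) ≤ k`, and `p(u) ≤ p(v)` for every arc `(u, v)`. -/
def IsKPotentialG {V : Type*} (A : Finset (V × V)) (bot top : V) (k : ℕ) (p : V → ℤ) : Prop :=
  p bot = k ∧ p top = 0 ∧ (∀ v, 0 ≤ p v ∧ p v ≤ k) ∧ ∀ a ∈ A, p a.1 ≤ p a.2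

/-- The total capacity of an arc of `Ĝ` for the reduction of {\sc Cov-k-Diverse}
(`φ(x) = max{0, x−1}`): the arcs `Â₁ = {(vⁱ, v^{i+1})}` and
`Â₂ = {(vⁱ, uⁱ) : (u,v) ∈ A} ∪ {(⊥ⁱ, t)} ∪ {(s, ⊤ⁱ)}` have capacity `M`, and the arcs
`Â₃ = {(uⁱ, v^{i+1}) : (u,v) ∈ A, w((u,v)) > 0, i ∈ {1,…,k−1}}` have capacity `w((u,v))`. -/
def cap11 {V : Type*} [DecidableEq V] (A : Finset (V × V)) (w : V × V → ℕ)
    (bot top : V) (k : ℕ) (M : ℤ) : VhatT V k → VhatT V k → ℤ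
  | Sum.inl (a, i), Sum.inl (b, j) =>
      (if a = b ∧ (j : ℕ) = (i : ℕ) + 1 then M else 0) +
      (if (b, a) ∈ A ∧ i = j then M else 0) +
      (if (a, b) ∈ A ∧ 0 < w (a, b) ∧ (j : ℕ) = (i : ℕ) + 1 then (w (a, b) : ℤ) else 0)
  | Sum.inr true, Sum.inl (v, _) => if v = top then M else 0
  | Sum.inl (v, _), Sum.inr false => if v = bot then M else 0
  | _, _ => 0

/-- `δ(X)`: the sum of the capacities of all arcs of `Ĝ` from `X` to `V̂ \ X`. -/
def cutVal {V : Type*} [Fintype V] [DecidableEq V] (k : ℕ)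
    (c : VhatT V k → VhatT V k → ℤ) (X : Finset (VhatT V k)) : ℤ :=
  ∑ x : VhatT V k, ∑ y : VhatT V k, if x ∈ X ∧ y ∉ X then c x y else 0

open Finset

lemma sum_range_ite_consecutive (c : ℤ) {k : ℕ} {a b : ℤ} (ha : 0 ≤ a) (hb : b ≤ k) :
    ∑ i ∈ range k, ∑ j ∈ range k, (if j = i + 1 ∧ a ≤ i ∧ (j : ℤ) < b then c else 0) =
      c * max 0 (b - a - 1) := by
  calc ∑ i ∈ range k, ∑ j ∈ range k, (if j = i + 1 ∧ a ≤ i ∧ (j : ℤ) < b then c else 0)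
      = ∑ i ∈ range k, if a ≤ i ∧ (i : ℤ) + 1 < b then c else 0 := by
        refine sum_congr rfl fun i _ => ?_
        simp only [ite_and, sum_ite_eq', mem_range]
        split_ifs <;> push_cast at * <;> first | rfl | omega
    _ = ∑ _i ∈ Ico a.toNat (b - 1).toNat, c := by
        rw [← sum_filter]
        congr 1
        ext i
        simp only [mem_filter, mem_range, mem_Ico]
        omega
    _ = c * max 0 (b - a - 1) := by
        rw [sum_const, Nat.card_Ico, nsmul_eq_mul, mul_comm]
        congr 1
        omega

lemma Fin.sum_sum_ite_consecutive (c : ℤ) {k : ℕ} {a b : ℤ} (ha : 0 ≤ a) (hb : b ≤ k) :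
    ∑ i : Fin k, ∑ j : Fin k, (if (j : ℕ) = i + 1 ∧ a ≤ (i : ℕ) ∧ ((j : ℕ) : ℤ) < b then c else 0) =
      c * max 0 (b - a - 1) := by
  rw [← sum_range_ite_consecutive c ha hb, ← Fin.sum_univ_eq_sum_range]
  exact sum_congr rfl fun i _ =>
    Fin.sum_univ_eq_sum_range
      (fun j => if j = (i : ℕ) + 1 ∧ a ≤ (i : ℕ) ∧ (j : ℤ) < b then c else 0) k

lemma Fin.monotone_of_succ {k : ℕ} {Q : Fin k → Prop}
    (hQ : ∀ i j : Fin k, (j : ℕ) = i + 1 → Q i → Q j) : Monotone Q := by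
  rintro ⟨i, hi⟩ ⟨j, hj⟩ hij
  change i ≤ j at hij
  induction j, hij using Nat.le_induction with
  | base => exact id
  | succ j hij ih => exact fun h => hQ ⟨j, by omega⟩ ⟨j + 1, hj⟩ rfl (ih (by omega) h)

lemma Fin.mem_iff_card_filter_not_le {k : ℕ} {Q : Fin k → Prop} [DecidablePred Q]
    (hQ : Monotone Q) (i : Fin k) : Q i ↔ #{j | ¬ Q j} ≤ (i : ℕ) := by
  constructor
  · intro hi
    calc #{j | ¬ Q j} ≤ #(Iio i) := card_le_card fun j hj => by
          simp only [mem_filter, mem_univ, true_and, mem_Iio] at hj ⊢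
          exact lt_of_not_ge fun hij => hj (hQ hij hi)
      _ = i := Fin.card_Iio i
  · intro hcard
    by_contra hi
    have : #(Iic i) ≤ #{j | ¬ Q j} := card_le_card fun j hj => by
      simp only [mem_filter, mem_univ, true_and, mem_Iic] at hj ⊢
      exact fun hj' => hi (hQ hj hj')
    rw [Fin.card_Iic] at this
    omega

section CutValue

variable {V : Type*} [Fintype V] [DecidableEq V] {k : ℕ}

lemma le_cutVal {c : VhatT V k → VhatT V k → ℤ} (hc : ∀ x y, 0 ≤ c x y)
    {X : Finset (VhatT V k)} {x y : VhatT V k} (hx : x ∈ X) (hy : y ∉ X) :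
    c x y ≤ cutVal k c X :=
  calc c x y = if x ∈ X ∧ y ∉ X then c x y else 0 := (if_pos ⟨hx, hy⟩).symm
    _ ≤ ∑ y', if x ∈ X ∧ y' ∉ X then c x y' else 0 :=
        single_le_sum (fun _ _ => ite_nonneg (hc _ _) le_rfl) (mem_univ y)
    _ ≤ cutVal k c X :=
        single_le_sum (f := fun x' => ∑ y', if x' ∈ X ∧ y' ∉ X then c x' y' else 0)
          (fun _ _ => sum_nonneg fun _ _ => ite_nonneg (hc _ _) le_rfl) (mem_univ x)

lemma mem_of_cutVal_lt {c : VhatT V k → VhatT V k → ℤ} (hc : ∀ x y, 0 ≤ c x y)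
    {X : Finset (VhatT V k)} {M : ℤ} (hX : cutVal k c X < M) {x y : VhatT V k}
    (hxy : M ≤ c x y) (hx : x ∈ X) : y ∈ X := by
  by_contra hy
  linarith [le_cutVal hc hx hy]

end CutValue

section Capacity

variable {V : Type*} [DecidableEq V] {k : ℕ} {p : V → ℤ}
variable (A : Finset (V × V)) (w : V × V → ℕ) (bot top : V) {M : ℤ}

lemma cap11_nonneg (hM : 0 ≤ M) (x y : VhatT V k) : 0 ≤ cap11 A w bot top k M x y := by
  rcases x with ⟨a, i⟩ | (_ | _) <;> rcases y with ⟨b, j⟩ | (_ | _) <;> simp only [cap11] <;>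
    (try split_ifs) <;> omega

lemma le_cap11_succ (v : V) {i j : Fin k} (hij : (j : ℕ) = i + 1) :
    M ≤ cap11 A w bot top k M (.inl (v, i)) (.inl (v, j)) := by
  simp only [cap11, hij, and_self, if_true]
  split_ifs <;> omega

lemma le_cap11_arc {u v : V} (huv : (u, v) ∈ A) (i : Fin k) :
    M ≤ cap11 A w bot top k M (.inl (v, i)) (.inl (u, i)) := by
  simp only [cap11, huv, and_self, if_true]
  split_ifs <;> omega

lemma ite_cap11_inl_inl_of_monotone (hp : ∀ e ∈ A, p e.1 ≤ p e.2) (a b : V) (i j : Fin k) :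
    (if p a ≤ (i : ℕ) ∧ ¬ p b ≤ (j : ℕ) then cap11 A w bot top k M (.inl (a, i)) (.inl (b, j))
      else 0) =
    if (a, b) ∈ A then
      (if (j : ℕ) = i + 1 ∧ p a ≤ (i : ℕ) ∧ ((j : ℕ) : ℤ) < p b then (w (a, b) : ℤ) else 0)
    else 0 := by
  simp only [cap11]
  split_ifs <;> grind

end Capacity

section LayerCut

variable {V : Type*} [Fintype V] [DecidableEq V]

def layerCut (k : ℕ) (p : V → ℤ) : Finset (VhatT V k) :=
  insert (.inr true) ((univ.filter fun x : V × Fin k => p x.1 ≤ (x.2 : ℕ)).map .inl)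

variable {k : ℕ} {p : V → ℤ}

@[simp] lemma inl_mem_layerCut {v : V} {i : Fin k} :
    (.inl (v, i) : VhatT V k) ∈ layerCut k p ↔ p v ≤ (i : ℕ) := by
  simp [layerCut]

@[simp] lemma inr_true_mem_layerCut : (.inr true : VhatT V k) ∈ layerCut k p := by
  simp [layerCut]

@[simp] lemma inr_false_not_mem_layerCut : (.inr false : VhatT V k) ∉ layerCut k p := by
  simp [layerCut]

lemma eq_layerCut {X : Finset (VhatT V k)} (hs : .inr true ∈ X) (ht : .inr false ∉ X)
    (hX : ∀ v i, (.inl (v, i) : VhatT V k) ∈ X ↔ p v ≤ (i : ℕ)) : X = layerCut k p := by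
  ext x
  rcases x with ⟨v, i⟩ | (_ | _) <;> simp [hX, hs, ht]

variable (A : Finset (V × V)) (w : V × V → ℕ) (bot top : V) (M : ℤ)

lemma cutVal_layerCut (hp : IsKPotentialG A bot top k p) :
    cutVal k (cap11 A w bot top k M) (layerCut k p) =
      ∑ e ∈ A, (w e : ℤ) * max 0 (p e.2 - p e.1 - 1) := by
  simp only [cutVal, Fintype.sum_sum_type, Fintype.sum_prod_type, Fintype.sum_bool,
    inl_mem_layerCut, inr_true_mem_layerCut, inr_false_not_mem_layerCut,
    ite_cap11_inl_inl_of_monotone A w bot top hp.2.2.2]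
  obtain ⟨hbot, htop, hbound, -⟩ := hp
  have hsink_arcs_uncut : ∀ v (i : Fin k),
      (if p v ≤ (i : ℕ) then if v = bot then M else 0 else 0) = 0 := by
    intro v i; have := i.isLt; split_ifs <;> first | rfl | (subst v; omega)
  have hsource_arcs_uncut : ∀ v (i : Fin k),
      (if ((i : ℕ) : ℤ) < p v then if v = top then M else 0 else 0) = 0 := by
    intro v i; split_ifs <;> first | rfl | (subst v; omega)
  simp only [cap11, not_true, not_false_eq_true, and_true, true_and, and_false, false_and,
    ite_self, not_le, hsink_arcs_uncut, hsource_arcs_uncut, add_zero, sum_const_zero]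
  rw [← sum_ite_mem_eq A, Fintype.sum_prod_type]
  refine sum_congr rfl fun a _ => ?_
  rw [sum_comm]
  refine sum_congr rfl fun b _ => ?_
  by_cases hA : (a, b) ∈ A
  · simp only [hA, if_true]
    rw [Fin.sum_sum_ite_consecutive _ (hbound a).1 (hbound b).2]
  · simp only [hA, if_false, sum_const_zero]

end LayerCut

section Potential

variable {V : Type*} [DecidableEq V] {k : ℕ}

def cutPotential (X : Finset (VhatT V k)) (v : V) : ℤ := #{i : Fin k | .inl (v, i) ∉ X}

variable {X : Finset (VhatT V k)}

lemma inl_mem_iff_cutPotential_le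
    (hX : ∀ v (i j : Fin k), (j : ℕ) = i + 1 → .inl (v, i) ∈ X → .inl (v, j) ∈ X)
    (v : V) (i : Fin k) : .inl (v, i) ∈ X ↔ cutPotential X v ≤ (i : ℕ) := by
  rw [Fin.mem_iff_card_filter_not_le (Fin.monotone_of_succ (hX v)) i, cutPotential]
  exact_mod_cast Iff.rfl

lemma isKPotentialG_cutPotential {A : Finset (V × V)} {bot top : V}
    (htop : ∀ i, .inl (top, i) ∈ X) (hbot : ∀ i, .inl (bot, i) ∉ X)
    (harc : ∀ u v, (u, v) ∈ A → ∀ i, .inl (v, i) ∈ X → .inl (u, i) ∈ X) :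
    IsKPotentialG A bot top k (cutPotential X) := by
  refine ⟨?_, ?_, fun v => ⟨?_, ?_⟩, ?_⟩
  · simp [cutPotential, hbot]
  · simp [cutPotential, htop]
  · exact Nat.cast_nonneg _
  · simpa [cutPotential] using card_filter_le (univ : Finset (Fin k)) _
  · rintro ⟨u, v⟩ huv
    simp only [cutPotential, Nat.cast_le]
    exact card_le_card fun i => by simpa using mt (harc u v huv i)

end Potential

theorem stmt_11_general {V : Type*} [Fintype V] [DecidableEq V]
    (A : Finset (V × V)) (w : V × V → ℕ) (top bot : V)
    (k : ℕ) (M : ℤ) (hMpos : 0 < M)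
    (φ : ℤ → ℤ) (hφ : φ = fun x => max 0 (x - 1)) :
    (∀ X : Finset (VhatT V k),
      (Sum.inr true : VhatT V k) ∈ X → (Sum.inr false : VhatT V k) ∉ X →
      cutVal k (cap11 A w bot top k M) X < M →
      ∃ p : V → ℤ, IsKPotentialG A bot top k p ∧
        (∑ a ∈ A, (w a : ℤ) * φ (p a.2 - p a.1)) = cutVal k (cap11 A w bot top k M) X) ∧
    (∀ p : V → ℤ, IsKPotentialG A bot top k p →
      ∃ X : Finset (VhatT V k),
        (Sum.inr true : VhatT V k) ∈ X ∧ (Sum.inr false : VhatT V k) ∉ X ∧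
        cutVal k (cap11 A w bot top k M) X = ∑ a ∈ A, (w a : ℤ) * φ (p a.2 - p a.1)) := by
  subst hφ
  refine ⟨fun X hs ht hcut => ?_,
    fun p hp => ⟨layerCut k p, by simp, by simp, cutVal_layerCut A w bot top M hp⟩⟩
  have closed : ∀ {x y}, M ≤ cap11 A w bot top k M x y → x ∈ X → y ∈ X :=
    mem_of_cutVal_lt (cap11_nonneg A w bot top hMpos.le) hcut
  have hp : IsKPotentialG A bot top k (cutPotential X) :=
    isKPotentialG_cutPotential (fun _ => closed (by simp [cap11]) hs)
      (fun _ h => ht (closed (by simp [cap11]) h))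
      (fun _ _ huv i => closed (le_cap11_arc A w bot top huv i))
  have hX : X = layerCut k (cutPotential X) :=
    eq_layerCut hs ht (inl_mem_iff_cutPotential_le fun v _ _ hij =>
      closed (le_cap11_succ A w bot top v hij))
  refine ⟨cutPotential X, hp, ?_⟩
  conv_rhs => rw [hX]
  exact (cutVal_layerCut A w bot top M hp).symm

/-- With `φ(x) = max{0, x−1}` and `Â₃ = {(uⁱ,v^{i+1}) : (u,v) ∈ A, w > 0}`
of capacity `w((u,v))`: every `X ⊆ V̂` with `s ∈ X`, `t ∉ X` and `δ(X) < M` yields a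
`k`-potential `p` with `H(p) = δ(X)`, and conversely every `k`-potential `p` yields such
an `X` with `δ(X) = H(p)`. -/
theorem stmt_11 {V : Type*} [Fintype V] [DecidableEq V]
    (A : Finset (V × V)) (w : V × V → ℕ) (top bot : V) (htb : top ≠ bot)
    (hacyc : ∀ v : V, ¬ Relation.TransGen (fun x y => (x, y) ∈ A) v v)
    (hsrc : ∀ u : V, (u, top) ∉ A)
    (hsrcu : ∀ v : V, (∀ u : V, (u, v) ∉ A) → v = top)
    (hsink : ∀ u : V, (bot, u) ∉ A)
    (hsinku : ∀ v : V, (∀ u : V, (v, u) ∉ A) → v = bot)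
    (k : ℕ) (hk : 0 < k) (M : ℤ) (hMpos : 0 < M)
    (φ : ℤ → ℤ) (hφ : φ = fun x => max 0 (x - 1))
    (hM : ∀ p : V → ℤ, IsKPotentialG A bot top k p →
      (∑ a ∈ A, (w a : ℤ) * φ (p a.2 - p a.1)) < M) :
    (∀ X : Finset (VhatT V k),
      (Sum.inr true : VhatT V k) ∈ X → (Sum.inr false : VhatT V k) ∉ X →
      cutVal k (cap11 A w bot top k M) X < M →
      ∃ p : V → ℤ, IsKPotentialG A bot top k p ∧
        (∑ a ∈ A, (w a : ℤ) * φ (p a.2 - p a.1)) = cutVal k (cap11 A w bot top k M) X) ∧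
    (∀ p : V → ℤ, IsKPotentialG A bot top k p →
      ∃ X : Finset (VhatT V k),
        (Sum.inr true : VhatT V k) ∈ X ∧ (Sum.inr false : VhatT V k) ∉ X ∧
        cutVal k (cap11 A w bot top k M) X = ∑ a ∈ A, (w a : ℤ) * φ (p a.2 - p a.1)) :=
  stmt_11_general A w top bot k M hMpos φ hφ
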